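/- For the boosted Elko spinor λ = λ^S_{-,+} and its dual row d, the Elko bilinear forms take the values: σ = d·λ = -2m; ω = -d·(γ0γ1γ2γ3)·λ = 0; J₀ = d·γ0·λ = 0, J₁ = d·γ1·λ = 2im·cosθ·cosφ, J₂ = d·γ2·λ = 2im·cosθ·sinφ, J₃ = d·γ3·λ = -2im·sinθ; K₀ = i·d·(γ0γ1γ2γ3)·γ0·λ = 0, K₁ = i·d·(γ0γ1γ2γ3)·γ1·λ = -2m·sinφ, K₂ = i·d·(γ0γ1γ2γ3)·γ2·λ = 2m·cosφ, K₃ = i·d·(γ0γ1γ2γ3)·γ3·λ = 0; S₀₁ = i·d·γ0γ1·λ = -2im·sinθ·cosφ, S₀₂ = i·d·γ0γ2·λ = -2im·sinθ·sinφ, S₀₃ = i·d·γ0γ3·λ = -2im·cosθ, and S₁₂ = i·d·γ1γ2·λ = S₁₃ = i·d·γ1γ3·λ = S₂₃ = i·d·γ2γ3·λ = 0. In particular σ and the K_μ are real while the nonzero J_μ and S_{0k} are purely imaginary. -/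

import Mathlib

open Matrix Complex

noncomputable section

/-- Pauli matrices -/
def σ1 : Matrix (Fin 2) (Fin 2) ℂ := !![0, 1; 1, 0]
def σ2 : Matrix (Fin 2) (Fin 2) ℂ := !![0, -I; I, 0]
def σ3 : Matrix (Fin 2) (Fin 2) ℂ := !![1, 0; 0, -1]

/-- Dirac matrices in the Weyl representation, blocks [[0,1],[1,0]], [[0,σk],[-σk,0]] -/
def γ0 : Matrix (Fin 4) (Fin 4) ℂ := !![0,0,1,0; 0,0,0,1; 1,0,0,0; 0,1,0,0]
def γ1 : Matrix (Fin 4) (Fin 4) ℂ := !![0,0,0,1; 0,0,1,0; 0,-1,0,0; -1,0,0,0]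
def γ2 : Matrix (Fin 4) (Fin 4) ℂ := !![0,0,0,-I; 0,0,I,0; 0,I,0,0; -I,0,0,0]
def γ3 : Matrix (Fin 4) (Fin 4) ℂ := !![0,0,1,0; 0,0,0,-1; -1,0,0,0; 0,1,0,0]

/-- the energy E = sqrt(p² + m²) -/
def Ee (m p : ℝ) : ℝ := Real.sqrt (p^2 + m^2)
/-- boost factors B± = sqrt((E+m)/2)(1 ± p/(E+m)) -/
def Bp (m p : ℝ) : ℝ := Real.sqrt ((Ee m p + m)/2) * (1 + p/(Ee m p + m))
def Bm (m p : ℝ) : ℝ := Real.sqrt ((Ee m p + m)/2) * (1 - p/(Ee m p + m))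

/-- e^{iφ/2}, e^{-iφ/2}, e^{iφ}, e^{-iφ} -/
def eP (φ : ℝ) : ℂ := Complex.exp (I * (φ:ℂ) / 2)
def eM (φ : ℝ) : ℂ := Complex.exp (-(I * (φ:ℂ)) / 2)
def ePf (φ : ℝ) : ℂ := Complex.exp (I * (φ:ℂ))
def eMf (φ : ℝ) : ℂ := Complex.exp (-(I * (φ:ℂ)))

/-- boosted Elko spinors -/
def lamS₁ (m p θ φ : ℝ) : Fin 4 → ℂ :=
  ((Bm m p : ℝ) : ℂ) • ![ -I * (Real.sin (θ/2) : ℂ) * eM φ,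
                           I * (Real.cos (θ/2) : ℂ) * eP φ,
                           (Real.cos (θ/2) : ℂ) * eM φ,
                           (Real.sin (θ/2) : ℂ) * eP φ ]

def lamS₂ (m p θ φ : ℝ) : Fin 4 → ℂ :=
  ((Bp m p : ℝ) : ℂ) • ![ I * (Real.cos (θ/2) : ℂ) * eM φ,
                           I * (Real.sin (θ/2) : ℂ) * eP φ,
                           (Real.sin (θ/2) : ℂ) * eM φ,
                           -(Real.cos (θ/2) : ℂ) * eP φ ]

def lamA₁ (m p θ φ : ℝ) : Fin 4 → ℂ :=
  ((Bm m p : ℝ) : ℂ) • ![ I * (Real.sin (θ/2) : ℂ) * eM φ,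
                           -I * (Real.cos (θ/2) : ℂ) * eP φ,
                           (Real.cos (θ/2) : ℂ) * eM φ,
                           (Real.sin (θ/2) : ℂ) * eP φ ]

def lamA₂ (m p θ φ : ℝ) : Fin 4 → ℂ :=
  ((Bp m p : ℝ) : ℂ) • ![ -I * (Real.cos (θ/2) : ℂ) * eM φ,
                           -I * (Real.sin (θ/2) : ℂ) * eP φ,
                           (Real.sin (θ/2) : ℂ) * eM φ,
                           -(Real.cos (θ/2) : ℂ) * eP φ ]

/-- the Ξ(p) operator -/
def Ξop (m p θ φ : ℝ) : Matrix (Fin 4) (Fin 4) ℂ :=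
  (1/(m:ℂ)) •
    !![ I * ((p * Real.sin θ : ℝ) : ℂ),
        -I * ((Ee m p + p * Real.cos θ : ℝ) : ℂ) * eMf φ, 0, 0;
        I * ((Ee m p - p * Real.cos θ : ℝ) : ℂ) * ePf φ,
        -I * ((p * Real.sin θ : ℝ) : ℂ), 0, 0;
        0, 0, -I * ((p * Real.sin θ : ℝ) : ℂ),
        -I * ((Ee m p - p * Real.cos θ : ℝ) : ℂ) * eMf φ;
        0, 0, I * ((Ee m p + p * Real.cos θ : ℝ) : ℂ) * ePf φ,
        I * ((p * Real.sin θ : ℝ) : ℂ) ]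

/-- the G(φ) matrix appearing in the Elko spin sums -/
def Gmat (φ : ℝ) : Matrix (Fin 4) (Fin 4) ℂ :=
  !![0, 0, 0, -I * eMf φ;
     0, 0, I * ePf φ, 0;
     0, -I * eMf φ, 0, 0;
     I * ePf φ, 0, 0, 0]

/-- momentum slash pslash = E γ0 + p sinθ cosφ γ1 + p sinθ sinφ γ2 + p cosθ γ3 -/
def pslash (m p θ φ : ℝ) : Matrix (Fin 4) (Fin 4) ℂ :=
  ((Ee m p : ℝ) : ℂ) • γ0 + ((p * Real.sin θ * Real.cos φ : ℝ) : ℂ) • γ1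
    + ((p * Real.sin θ * Real.sin φ : ℝ) : ℂ) • γ2 + ((p * Real.cos θ : ℝ) : ℂ) • γ3

/-- Elko dual rows ¬λ -/
def dS₁ (m p θ φ : ℝ) : Fin 4 → ℂ := I • Matrix.vecMul (star (lamS₂ m p θ φ)) γ0
def dS₂ (m p θ φ : ℝ) : Fin 4 → ℂ := (-I) • Matrix.vecMul (star (lamS₁ m p θ φ)) γ0
def dA₁ (m p θ φ : ℝ) : Fin 4 → ℂ := I • Matrix.vecMul (star (lamA₂ m p θ φ)) γ0
def dA₂ (m p θ φ : ℝ) : Fin 4 → ℂ := (-I) • Matrix.vecMul (star (lamA₁ m p θ φ)) γ0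

end

/-- the dual row d = B₊·(-i·s·e^{iφ/2}, i·c·e^{-iφ/2}, -c·e^{iφ/2}, -s·e^{-iφ/2}) -/
noncomputable def dRow (m p θ φ : ℝ) : Fin 4 → ℂ :=
  ((Bp m p : ℝ) : ℂ) • ![ -I * (Real.sin (θ/2) : ℂ) * eP φ,
                           I * (Real.cos (θ/2) : ℂ) * eM φ,
                           -(Real.cos (θ/2) : ℂ) * eP φ,
                           -(Real.sin (θ/2) : ℂ) * eM φ ]

/-- the bilinear d·M·λ -/
noncomputable def bil (m p θ φ : ℝ) (M : Matrix (Fin 4) (Fin 4) ℂ) : ℂ :=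
  dotProduct (dRow m p θ φ) (M.mulVec (lamS₁ m p θ φ))

/-!
The dual row and the spinor factor as `d = B₊ d₀` and `λ = B₋ λ₀`, where `d₀`, `λ₀` depend only
on the angles. Since `(E + m)² - p² = 2m(E + m)`, the boost factors multiply to `B₊ B₋ = m`, so
every bilinear form is `m` times `d₀ M λ₀`. The Weyl matrices act on spinors by permuting
components up to phases, and what remains are the half-angle formulas in `θ` and Euler's formula
for `e^{±iφ}`.
-/

theorem Bm_mul_Bp {m : ℝ} (hm : 0 < m) (p : ℝ) : Bm m p * Bp m p = m := by
  have hE : Ee m p ^ 2 = p ^ 2 + m ^ 2 := Real.sq_sqrt (by positivity)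
  have hEm : 0 < Ee m p + m := add_pos_of_nonneg_of_pos (Real.sqrt_nonneg _) hm
  rw [Bm, Bp, mul_mul_mul_comm, Real.mul_self_sqrt (by positivity)]
  field_simp
  linear_combination hE

section WeylAction

variable (a b c d : ℂ)

theorem γ0_mulVec : γ0 *ᵥ ![a, b, c, d] = ![c, d, a, b] := by
  ext i; fin_cases i <;> simp [γ0, mulVec]

theorem γ1_mulVec : γ1 *ᵥ ![a, b, c, d] = ![d, c, -b, -a] := by
  ext i; fin_cases i <;> simp [γ1, mulVec]

theorem γ2_mulVec : γ2 *ᵥ ![a, b, c, d] = ![-I * d, I * c, I * b, -I * a] := by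
  ext i; fin_cases i <;> simp [γ2, mulVec]

theorem γ3_mulVec : γ3 *ᵥ ![a, b, c, d] = ![c, -d, -a, b] := by
  ext i; fin_cases i <;> simp [γ3, mulVec]

end WeylAction

theorem eP_sq (φ : ℝ) : eP φ ^ 2 = Real.cos φ + Real.sin φ * I := by
  rw [eP, ← Complex.exp_nat_mul, Complex.ofReal_cos, Complex.ofReal_sin, ← Complex.exp_mul_I]
  ring_nf

theorem eM_sq (φ : ℝ) : eM φ ^ 2 = Real.cos φ - Real.sin φ * I := by
  rw [eM, ← Complex.exp_nat_mul, show ((2 : ℕ) : ℂ) * (-(I * φ) / 2) = (-φ : ℂ) * I by push_cast; ring,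
    Complex.exp_mul_I, Complex.cos_neg, Complex.sin_neg, Complex.ofReal_cos, Complex.ofReal_sin]
  ring

theorem eP_mul_eM (φ : ℝ) : eP φ * eM φ = 1 := by
  rw [eP, eM, ← Complex.exp_add, ← Complex.exp_zero]
  ring_nf

theorem ofReal_cos_eq_half_angle (θ : ℝ) :
    (Real.cos θ : ℂ) = (Real.cos (θ / 2) : ℂ) ^ 2 - (Real.sin (θ / 2) : ℂ) ^ 2 := by
  have h := Real.cos_two_mul' (θ / 2)
  rw [mul_div_cancel₀ θ two_ne_zero] at h
  exact_mod_cast h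

theorem ofReal_sin_eq_half_angle (θ : ℝ) :
    (Real.sin θ : ℂ) = 2 * (Real.sin (θ / 2) : ℂ) * (Real.cos (θ / 2) : ℂ) := by
  have h := Real.sin_two_mul (θ / 2)
  rw [mul_div_cancel₀ θ two_ne_zero] at h
  exact_mod_cast h

/- `d` and `λ` without their boost factors `B₊`, `B₋`, written in `s = sin (θ/2)`, `c = cos (θ/2)`,
`u = e^{iφ/2}` and `v = e^{-iφ/2}`. -/
def elkoDualRow₀ (s c u v : ℂ) : Fin 4 → ℂ := ![-I * s * u, I * c * v, -c * u, -s * v]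

def elkoSpinor₀ (s c u v : ℂ) : Fin 4 → ℂ := ![-I * s * v, I * c * u, c * v, s * u]

theorem bil_eq_mass_mul {m : ℝ} (hm : 0 < m) (p θ φ : ℝ) (M : Matrix (Fin 4) (Fin 4) ℂ) :
    bil m p θ φ M = m * (elkoDualRow₀ (Real.sin (θ / 2)) (Real.cos (θ / 2)) (eP φ) (eM φ) ⬝ᵥ
      M *ᵥ elkoSpinor₀ (Real.sin (θ / 2)) (Real.cos (θ / 2)) (eP φ) (eM φ)) := by
  rw [bil, dRow, lamS₁, mulVec_smul, dotProduct_smul, smul_dotProduct, smul_smul, smul_eq_mul,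
    ← Complex.ofReal_mul, Bm_mul_Bp hm]
  rfl

theorem elko_bilinear_forms_general (m p θ φ : ℝ) (hm : 0 < m) :
    bil m p θ φ 1 = -(2 * (m : ℂ)) ∧
    -(bil m p θ φ (γ0 * γ1 * γ2 * γ3)) = 0 ∧
    bil m p θ φ γ0 = 0 ∧
    bil m p θ φ γ1 = 2 * I * (m : ℂ) * (Real.cos θ : ℂ) * (Real.cos φ : ℂ) ∧
    bil m p θ φ γ2 = 2 * I * (m : ℂ) * (Real.cos θ : ℂ) * (Real.sin φ : ℂ) ∧
    bil m p θ φ γ3 = -(2 * I * (m : ℂ) * (Real.sin θ : ℂ)) ∧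
    I * bil m p θ φ (γ0 * γ1 * γ2 * γ3 * γ0) = 0 ∧
    I * bil m p θ φ (γ0 * γ1 * γ2 * γ3 * γ1) = -(2 * (m : ℂ) * (Real.sin φ : ℂ)) ∧
    I * bil m p θ φ (γ0 * γ1 * γ2 * γ3 * γ2) = 2 * (m : ℂ) * (Real.cos φ : ℂ) ∧
    I * bil m p θ φ (γ0 * γ1 * γ2 * γ3 * γ3) = 0 ∧
    I * bil m p θ φ (γ0 * γ1) = -(2 * I * (m : ℂ) * (Real.sin θ : ℂ) * (Real.cos φ : ℂ)) ∧
    I * bil m p θ φ (γ0 * γ2) = -(2 * I * (m : ℂ) * (Real.sin θ : ℂ) * (Real.sin φ : ℂ)) ∧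
    I * bil m p θ φ (γ0 * γ3) = -(2 * I * (m : ℂ) * (Real.cos θ : ℂ)) ∧
    I * bil m p θ φ (γ1 * γ2) = 0 ∧
    I * bil m p θ φ (γ1 * γ3) = 0 ∧
    I * bil m p θ φ (γ2 * γ3) = 0 := by
  have hsc : (Real.sin (θ / 2) : ℂ) ^ 2 + (Real.cos (θ / 2) : ℂ) ^ 2 = 1 :=
    mod_cast Real.sin_sq_add_cos_sq _
  have hcos := ofReal_cos_eq_half_angle θ
  have hsin := ofReal_sin_eq_half_angle θ
  have hP := eP_sq φ
  have hM := eM_sq φ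
  have hPM := eP_mul_eM φ
  have hI := Complex.I_sq
  simp only [bil_eq_mass_mul hm, ← mulVec_mulVec, one_mulVec, elkoDualRow₀, elkoSpinor₀, γ0_mulVec, γ1_mulVec,
    γ2_mulVec, γ3_mulVec, cons_dotProduct_cons, dotProduct_of_isEmpty, add_zero]
  refine ⟨?_, ?_, ?_, ?_, ?_, ?_, ?_, ?_, ?_, ?_, ?_, ?_, ?_, ?_, ?_, ?_⟩ <;> grind

/-- The Elko bilinear forms for λ = λ^S_{-,+}: σ and the K_μ are real while the nonzero
J_μ and S_{0k} are purely imaginary. -/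
theorem elko_bilinear_forms (m p θ φ : ℝ) (hm : 0 < m) (hp : 0 ≤ p) :
    bil m p θ φ 1 = -(2 * (m : ℂ)) ∧
    -(bil m p θ φ (γ0 * γ1 * γ2 * γ3)) = 0 ∧
    bil m p θ φ γ0 = 0 ∧
    bil m p θ φ γ1 = 2 * I * (m : ℂ) * (Real.cos θ : ℂ) * (Real.cos φ : ℂ) ∧
    bil m p θ φ γ2 = 2 * I * (m : ℂ) * (Real.cos θ : ℂ) * (Real.sin φ : ℂ) ∧
    bil m p θ φ γ3 = -(2 * I * (m : ℂ) * (Real.sin θ : ℂ)) ∧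
    I * bil m p θ φ (γ0 * γ1 * γ2 * γ3 * γ0) = 0 ∧
    I * bil m p θ φ (γ0 * γ1 * γ2 * γ3 * γ1) = -(2 * (m : ℂ) * (Real.sin φ : ℂ)) ∧
    I * bil m p θ φ (γ0 * γ1 * γ2 * γ3 * γ2) = 2 * (m : ℂ) * (Real.cos φ : ℂ) ∧
    I * bil m p θ φ (γ0 * γ1 * γ2 * γ3 * γ3) = 0 ∧
    I * bil m p θ φ (γ0 * γ1) = -(2 * I * (m : ℂ) * (Real.sin θ : ℂ) * (Real.cos φ : ℂ)) ∧
    I * bil m p θ φ (γ0 * γ2) = -(2 * I * (m : ℂ) * (Real.sin θ : ℂ) * (Real.sin φ : ℂ)) ∧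
    I * bil m p θ φ (γ0 * γ3) = -(2 * I * (m : ℂ) * (Real.cos θ : ℂ)) ∧
    I * bil m p θ φ (γ1 * γ2) = 0 ∧
    I * bil m p θ φ (γ1 * γ3) = 0 ∧
    I * bil m p θ φ (γ2 * γ3) = 0 :=
  elko_bilinear_forms_general m p θ φ hm
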